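/- arXiv:q-alg/9605015 — 5 statements merged into one kernel-verified Lean document; each statement's English description precedes it below -/
import Mathlib

section
/- Let q be a primitive l-th root of unity in ℂ with l odd, and let x1, x2 be nonzero complex numbers. Define C_1 = λ (x1 - x1^{-1})(x2 - x2^{-1}) where λ = x2/x1, and C_p by the recursion C_{p+1} = λ² C_p, so that C_p = λ^{2p-2} C_1. Then the polynomial expression P = (C_1+1)^l - 1 + Σ_{m≥2, n≥0, m+n≤l} C_m C_1^n · (l/(m-1)) · binom(m+n-1, n+1) · binom(l-m, n) equals λ^l (x1^l - x1^{-l})(x2^l - x2^{-l}). -/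
open Finset

/-- coefficient of `r^(m-1) * s^(n+1)` in the polynomial `S_l`. -/
noncomputable def co (l m n : ℕ) : ℂ :=
  if m + n ≤ l then
    (l : ℂ) * ((Nat.factorial (m + n - 1) : ℕ) : ℂ) /
        (((Nat.factorial (m - 1) : ℕ) : ℂ) * ((Nat.factorial (n + 1) : ℕ) : ℂ)) *
      (((l - m).choose n : ℕ) : ℂ) * (-1) ^ n
  else 0

/-- the double sum `S_l(r,s)`. -/
noncomputable def SS (r s : ℂ) (l : ℕ) : ℂ :=
  ∑ m ∈ Finset.Icc 2 l, ∑ n ∈ Finset.range (l - m + 1),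
    (l : ℂ) * ((Nat.factorial (m + n - 1) : ℕ) : ℂ) /
        (((Nat.factorial (m - 1) : ℕ) : ℂ) * ((Nat.factorial (n + 1) : ℕ) : ℂ)) *
      (((l - m).choose n : ℕ) : ℂ) * (-1) ^ n * r ^ (m - 1) * s ^ (n + 1)

lemma cast_choose_add (y z : ℕ) :
    (((y + z).choose y : ℕ) : ℂ) = Nat.factorial (y + z) / (Nat.factorial y * Nat.factorial z) := by
  rw [Nat.cast_choose ℂ (Nat.le_add_right y z), Nat.add_sub_cancel_left]

lemma cast_choose' (N K D : ℕ) (h : N = K + D) :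
    ((N.choose K : ℕ) : ℂ) = ((Nat.factorial N : ℕ) : ℂ) /
      (((Nat.factorial K : ℕ) : ℂ) * ((Nat.factorial D : ℕ) : ℂ)) := by
  subst h; exact cast_choose_add K D

lemma co_eq (l m n : ℕ) (h : m + n ≤ l) :
    co l m n = (l : ℂ) * ((Nat.factorial (m + n - 1) : ℕ) : ℂ) /
        (((Nat.factorial (m - 1) : ℕ) : ℂ) * ((Nat.factorial (n + 1) : ℕ) : ℂ)) *
      (((l - m).choose n : ℕ) : ℂ) * (-1) ^ n := by
  simp only [co, if_pos h]

lemma co_zero (l m n : ℕ) (h : ¬ (m + n ≤ l)) : co l m n = 0 := by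
  simp only [co, if_neg h]

lemma fact_ne (x : ℕ) : ((Nat.factorial x : ℕ) : ℂ) ≠ 0 :=
  Nat.cast_ne_zero.2 (Nat.factorial_ne_zero x)

set_option maxHeartbeats 1000000 in
lemma co_rec (k m n : ℕ) (hm2 : 2 ≤ m) (hm : m ≤ k + 3) (hn : n ≤ k + 1) :
    co (k+3) m n = co (k+2) m n - (if 1 ≤ n then co (k+2) m (n-1) else 0)
      + (if 3 ≤ m then co (k+2) (m-1) n else 0) - (if 3 ≤ m then co (k+1) (m-1) n else 0)
      + (if m = k+3 ∧ n = 0 then 1 else 0)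
      + (if m = 2 then (((k+1).choose n : ℕ) : ℂ) * (-1)^n else 0) := by
  rcases eq_or_lt_of_le hm2 with hm2e | hm3
  · -- m = 2
    obtain rfl : m = 2 := hm2e.symm
    have h3 : ¬ (3 ≤ (2:ℕ)) := by omega
    have hkn : ¬ ((2:ℕ) = k+3 ∧ n = 0) := by omega
    rw [if_neg h3, if_neg h3, if_neg hkn, if_pos rfl]
    rcases n with _ | b
    · -- n = 0
      rw [if_neg (by omega : ¬ 1 ≤ 0),
          co_eq _ _ _ (by omega), co_eq _ _ _ (by omega)]
      simp only [Nat.choose_zero_right]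
      have f1 := fact_ne 1
      have f2 := fact_ne (0+1)
      field_simp
      push_cast
      ring
    · -- n = b + 1
      rw [if_pos (by omega : 1 ≤ b+1)]
      have hb : b ≤ k := by omega
      rcases eq_or_lt_of_le hb with hbe | hblt
      · -- b = k
        obtain rfl : b = k := hbe
        rw [co_eq _ _ _ (by omega), co_zero _ _ _ (by omega),
            show b+1-1 = b from by omega, co_eq _ _ _ (by omega),
            show 2+(b+1)-1 = b+2 from by omega,
            show 2+b-1 = b+1 from by omega,
            show (2:ℕ)-1 = 1 from by omega,
            show b+1+1 = b+2 from by omega,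
            show b+3-2 = b+1 from by omega,
            show b+2-2 = b from by omega,
            Nat.choose_self, Nat.choose_self]
        have f1 := fact_ne 1
        have f2 := fact_ne (b+1)
        have f3 := fact_ne (b+2)
        field_simp
        push_cast
        ring
      · -- b < k
        rw [co_eq _ _ _ (by omega), co_eq _ _ _ (by omega),
            show 2+(b+1)-1 = b+2 from by omega,
            show b+1-1 = b from by omega, co_eq _ _ _ (by omega),
            show 2+b-1 = b+1 from by omega,
            show (2:ℕ)-1 = 1 from by omega,
            show b+1+1 = b+2 from by omega,
            show k+3-2 = k+1 from by omega,
            show k+2-2 = k from by omega]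
        have hp : (((k+1).choose (b+1) : ℕ) : ℂ)
            = ((k.choose b : ℕ) : ℂ) + ((k.choose (b+1) : ℕ) : ℂ) := by
          exact_mod_cast congrArg (Nat.cast : ℕ → ℂ) (Nat.choose_succ_succ k b)
        rw [hp]
        have f1 := fact_ne 1
        have f2 := fact_ne (b+1)
        have f3 := fact_ne (b+2)
        field_simp
        push_cast
        ring
  · -- 3 ≤ m
    have h3 : 3 ≤ m := hm3
    rw [if_pos h3, if_pos h3, if_neg (by omega : ¬ m = 2)]
    by_cases hg : m + n ≤ k + 3
    · rcases eq_or_lt_of_le hg with hge | hlt2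
      · -- m + n = k + 3
        rcases n with _ | b
        · -- n = 0, m = k+3
          obtain rfl : m = k+3 := by omega
          rw [if_neg (by omega : ¬ 1 ≤ 0),
              if_pos (show (k+3 = k+3 ∧ 0 = 0) from ⟨rfl, rfl⟩),
              co_eq _ _ _ (by omega), co_zero _ _ _ (by omega),
              co_eq _ _ _ (by omega), co_zero _ _ _ (by omega),
              show k+3+0-1 = k+2 from by omega,
              show k+2+0-1 = k+1 from by omega]
          simp only [Nat.choose_zero_right, Nat.sub_self]
          have f1 := fact_ne (k+2)
          have f2 := fact_ne (k+1)
          have f3 := fact_ne (0+1)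
          field_simp
          push_cast
          ring
        · -- n = b+1
          obtain ⟨a, rfl⟩ := Nat.exists_eq_add_of_le h3
          obtain rfl : k = a+b+1 := by omega
          rw [if_pos (by omega : 1 ≤ b+1),
              if_neg (by omega : ¬ (3 + a = a + b + 1 + 3 ∧ b + 1 = 0)),
              co_eq _ _ _ (by omega), co_zero _ _ _ (by omega),
              show b+1-1 = b from by omega, co_eq _ _ _ (by omega),
              co_eq _ _ _ (by omega), co_zero _ _ _ (by omega),
              show 3+a+(b+1)-1 = a+b+3 from by omega,
              show 3+a-1 = a+2 from by omega,
              show b+1+1 = b+2 from by omega,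
              show a+b+1+3-(3+a) = b+1 from by omega,
              show 3+a+b-1 = a+b+2 from by omega,
              show a+b+1+2-(3+a) = b from by omega,
              show a+2+(b+1)-1 = a+b+2 from by omega,
              show a+2-1 = a+1 from by omega,
              show a+b+1+2-(a+2) = b+1 from by omega]
          simp only [Nat.choose_self, Nat.cast_one]
          have fA2 := fact_ne (a+2)
          have fA1 := fact_ne (a+1)
          have fB2 := fact_ne (b+2)
          have fB1 := fact_ne (b+1)
          have sa : ((a:ℂ)+2) ≠ 0 := by
            have := Nat.cast_ne_zero (R := ℂ) |>.mpr (show a+2 ≠ 0 by omega)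
            push_cast at this; exact this
          have sb : ((b:ℂ)+2) ≠ 0 := by
            have := Nat.cast_ne_zero (R := ℂ) |>.mpr (show b+2 ≠ 0 by omega)
            push_cast at this; exact this
          have hD : ((a:ℂ)+2)*((b:ℂ)+2)*((Nat.factorial (a+1) : ℕ) : ℂ)*((Nat.factorial (b+1) : ℕ) : ℂ) ≠ 0 :=
            mul_ne_zero (mul_ne_zero (mul_ne_zero sa sb) fA1) fB1
          have t1 : ((a+b+1+3 : ℕ) : ℂ) * ((Nat.factorial (a+b+3) : ℕ) : ℂ) /
                (((Nat.factorial (a+2) : ℕ) : ℂ) * ((Nat.factorial (b+2) : ℕ) : ℂ)) =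
              (((a:ℂ)+(b:ℂ)+4)*((a:ℂ)+(b:ℂ)+3)*((Nat.factorial (a+b+2) : ℕ) : ℂ)) /
                (((a:ℂ)+2)*((b:ℂ)+2)*((Nat.factorial (a+1) : ℕ) : ℂ)*((Nat.factorial (b+1) : ℕ) : ℂ)) := by
            rw [div_eq_div_iff (mul_ne_zero fA2 fB2) hD,
                show a+b+3 = (a+b+2)+1 from by omega, Nat.factorial_succ (a+b+2),
                show a+2 = (a+1)+1 from by omega, Nat.factorial_succ (a+1),
                show b+2 = (b+1)+1 from by omega, Nat.factorial_succ (b+1)]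
            push_cast
            ring
          have t2 : ((a+b+1+2 : ℕ) : ℂ) * ((Nat.factorial (a+b+2) : ℕ) : ℂ) /
                (((Nat.factorial (a+2) : ℕ) : ℂ) * ((Nat.factorial (b+1) : ℕ) : ℂ)) =
              (((a:ℂ)+(b:ℂ)+3)*((Nat.factorial (a+b+2) : ℕ) : ℂ)*((b:ℂ)+2)) /
                (((a:ℂ)+2)*((b:ℂ)+2)*((Nat.factorial (a+1) : ℕ) : ℂ)*((Nat.factorial (b+1) : ℕ) : ℂ)) := by
            rw [div_eq_div_iff (mul_ne_zero fA2 fB1) hD,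
                show a+2 = (a+1)+1 from by omega, Nat.factorial_succ (a+1)]
            push_cast
            ring
          have t3 : ((a+b+1+2 : ℕ) : ℂ) * ((Nat.factorial (a+b+2) : ℕ) : ℂ) /
                (((Nat.factorial (a+1) : ℕ) : ℂ) * ((Nat.factorial (b+2) : ℕ) : ℂ)) =
              (((a:ℂ)+(b:ℂ)+3)*((Nat.factorial (a+b+2) : ℕ) : ℂ)*((a:ℂ)+2)) /
                (((a:ℂ)+2)*((b:ℂ)+2)*((Nat.factorial (a+1) : ℕ) : ℂ)*((Nat.factorial (b+1) : ℕ) : ℂ)) := by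
            rw [div_eq_div_iff (mul_ne_zero fA1 fB2) hD,
                show b+2 = (b+1)+1 from by omega, Nat.factorial_succ (b+1)]
            push_cast
            ring
          have hN : (((a:ℂ)+(b:ℂ)+4)*((a:ℂ)+(b:ℂ)+3)*((Nat.factorial (a+b+2) : ℕ) : ℂ)) =
              (((a:ℂ)+(b:ℂ)+3)*((Nat.factorial (a+b+2) : ℕ) : ℂ)*((b:ℂ)+2)) +
              (((a:ℂ)+(b:ℂ)+3)*((Nat.factorial (a+b+2) : ℕ) : ℂ)*((a:ℂ)+2)) := by
            ring
          linear_combination ((-1:ℂ)^(b+1)) * t1 - ((-1:ℂ)^(b+1)) * t2 - ((-1:ℂ)^(b+1)) * t3 +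
            (((-1:ℂ)^(b+1)) / (((a:ℂ)+2)*((b:ℂ)+2)*((Nat.factorial (a+1) : ℕ) : ℂ)*((Nat.factorial (b+1) : ℕ) : ℂ))) * hN
      · -- m + n ≤ k + 2
        rw [if_neg (by omega : ¬ (m = k+3 ∧ n = 0))]
        obtain ⟨a, rfl⟩ := Nat.exists_eq_add_of_le h3
        rcases n with _ | b
        · -- n = 0
          rw [if_neg (by omega : ¬ 1 ≤ 0),
              co_eq _ _ _ (by omega), co_eq _ _ _ (by omega),
              co_eq _ _ _ (by omega), co_eq _ _ _ (by omega),
              show 3+a+0-1 = a+2 from by omega,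
              show 3+a-1 = a+2 from by omega,
              show a+2+0-1 = a+1 from by omega]
          simp only [Nat.choose_zero_right]
          have f1 := fact_ne (a+2)
          have f2 := fact_ne (a+1)
          have f3 := fact_ne (0+1)
          push_cast at f1 f2 f3 ⊢
          field_simp
          ring
        · -- n = b+1 : generic interior case
          rw [if_pos (by omega : 1 ≤ b+1)]
          obtain ⟨t, rfl⟩ : ∃ t, k = a+b+t+2 := ⟨k-(a+b+2), by omega⟩
          rw [co_eq _ _ _ (by omega), co_eq _ _ _ (by omega),
              show b+1-1 = b from by omega, co_eq _ _ _ (by omega),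
              co_eq _ _ _ (by omega), co_eq _ _ _ (by omega),
              show 3+a+(b+1)-1 = a+b+3 from by omega,
              show 3+a-1 = a+2 from by omega,
              show b+1+1 = b+2 from by omega,
              show 3+a+b-1 = a+b+2 from by omega,
              show a+2+(b+1)-1 = a+b+2 from by omega,
              show a+2-1 = a+1 from by omega,
              show a+b+t+2+3-(3+a) = b+t+2 from by omega,
              show a+b+t+2+2-(3+a) = b+t+1 from by omega,
              show a+b+t+2+2-(a+2) = b+t+2 from by omega,
              show a+b+t+2+1-(a+2) = b+t+1 from by omega]
          have fA2 := fact_ne (a+2)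
          have fA1 := fact_ne (a+1)
          have fB2 := fact_ne (b+2)
          have fB1 := fact_ne (b+1)
          have fB0 := fact_ne b
          have fT1 := fact_ne (t+1)
          have fT0 := fact_ne t
          have sa : ((a:ℂ)+2) ≠ 0 := by
            have := Nat.cast_ne_zero (R := ℂ) |>.mpr (show a+2 ≠ 0 by omega)
            push_cast at this; exact this
          have sb : ((b:ℂ)+2) ≠ 0 := by
            have := Nat.cast_ne_zero (R := ℂ) |>.mpr (show b+2 ≠ 0 by omega)
            push_cast at this; exact this
          have sb1 : ((b:ℂ)+1) ≠ 0 := by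
            have := Nat.cast_ne_zero (R := ℂ) |>.mpr (show b+1 ≠ 0 by omega)
            push_cast at this; exact this
          have st : ((t:ℂ)+1) ≠ 0 := by
            have := Nat.cast_ne_zero (R := ℂ) |>.mpr (show t+1 ≠ 0 by omega)
            push_cast at this; exact this
          have hD : ((a:ℂ)+2)*((b:ℂ)+2)*((b:ℂ)+1)*((b:ℂ)+1)*((t:ℂ)+1) *
              ((Nat.factorial (a+1) : ℕ) : ℂ) * ((Nat.factorial b : ℕ) : ℂ) *
              ((Nat.factorial b : ℕ) : ℂ) * ((Nat.factorial t : ℕ) : ℂ) ≠ 0 := by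
            repeat' apply mul_ne_zero
            all_goals assumption
          have t1 : ((a+b+t+2+3 : ℕ) : ℂ) * ((Nat.factorial (a+b+3) : ℕ) : ℂ) /
                (((Nat.factorial (a+2) : ℕ) : ℂ) * ((Nat.factorial (b+2) : ℕ) : ℂ)) *
                (((b+t+2).choose (b+1) : ℕ) : ℂ) =
              (((a:ℂ)+(b:ℂ)+(t:ℂ)+5)*((a:ℂ)+(b:ℂ)+3)*((Nat.factorial (a+b+2) : ℕ) : ℂ)*((b:ℂ)+(t:ℂ)+2)*((Nat.factorial (b+t+1) : ℕ) : ℂ)) /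
                (((a:ℂ)+2)*((b:ℂ)+2)*((b:ℂ)+1)*((b:ℂ)+1)*((t:ℂ)+1) *
                  ((Nat.factorial (a+1) : ℕ) : ℂ) * ((Nat.factorial b : ℕ) : ℂ) *
                  ((Nat.factorial b : ℕ) : ℂ) * ((Nat.factorial t : ℕ) : ℂ)) := by
            rw [cast_choose' (b+t+2) (b+1) (t+1) (by omega), div_mul_div_comm,
                div_eq_div_iff (mul_ne_zero (mul_ne_zero fA2 fB2) (mul_ne_zero fB1 fT1)) hD,
                show a+b+3 = (a+b+2)+1 from by omega, Nat.factorial_succ (a+b+2),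
                show a+2 = (a+1)+1 from by omega, Nat.factorial_succ (a+1),
                show b+2 = (b+1)+1 from by omega, Nat.factorial_succ (b+1),
                Nat.factorial_succ b,
                show b+t+2 = (b+t+1)+1 from by omega, Nat.factorial_succ (b+t+1),
                Nat.factorial_succ t]
            push_cast
            ring
          have t2 : ((a+b+t+2+2 : ℕ) : ℂ) * ((Nat.factorial (a+b+3) : ℕ) : ℂ) /
                (((Nat.factorial (a+2) : ℕ) : ℂ) * ((Nat.factorial (b+2) : ℕ) : ℂ)) *
                (((b+t+1).choose (b+1) : ℕ) : ℂ) =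
              (((a:ℂ)+(b:ℂ)+(t:ℂ)+4)*((a:ℂ)+(b:ℂ)+3)*((Nat.factorial (a+b+2) : ℕ) : ℂ)*((Nat.factorial (b+t+1) : ℕ) : ℂ)*((t:ℂ)+1)) /
                (((a:ℂ)+2)*((b:ℂ)+2)*((b:ℂ)+1)*((b:ℂ)+1)*((t:ℂ)+1) *
                  ((Nat.factorial (a+1) : ℕ) : ℂ) * ((Nat.factorial b : ℕ) : ℂ) *
                  ((Nat.factorial b : ℕ) : ℂ) * ((Nat.factorial t : ℕ) : ℂ)) := by
            rw [cast_choose' (b+t+1) (b+1) t (by omega), div_mul_div_comm,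
                div_eq_div_iff (mul_ne_zero (mul_ne_zero fA2 fB2) (mul_ne_zero fB1 fT0)) hD,
                show a+b+3 = (a+b+2)+1 from by omega, Nat.factorial_succ (a+b+2),
                show a+2 = (a+1)+1 from by omega, Nat.factorial_succ (a+1),
                show b+2 = (b+1)+1 from by omega, Nat.factorial_succ (b+1),
                Nat.factorial_succ b]
            push_cast
            ring
          have t3 : ((a+b+t+2+2 : ℕ) : ℂ) * ((Nat.factorial (a+b+2) : ℕ) : ℂ) /
                (((Nat.factorial (a+2) : ℕ) : ℂ) * ((Nat.factorial (b+1) : ℕ) : ℂ)) *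
                (((b+t+1).choose b : ℕ) : ℂ) =
              (((a:ℂ)+(b:ℂ)+(t:ℂ)+4)*((Nat.factorial (a+b+2) : ℕ) : ℂ)*((Nat.factorial (b+t+1) : ℕ) : ℂ)*(((b:ℂ)+2)*((b:ℂ)+1))) /
                (((a:ℂ)+2)*((b:ℂ)+2)*((b:ℂ)+1)*((b:ℂ)+1)*((t:ℂ)+1) *
                  ((Nat.factorial (a+1) : ℕ) : ℂ) * ((Nat.factorial b : ℕ) : ℂ) *
                  ((Nat.factorial b : ℕ) : ℂ) * ((Nat.factorial t : ℕ) : ℂ)) := by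
            rw [cast_choose' (b+t+1) b (t+1) (by omega), div_mul_div_comm,
                div_eq_div_iff (mul_ne_zero (mul_ne_zero fA2 fB1) (mul_ne_zero fB0 fT1)) hD,
                show a+2 = (a+1)+1 from by omega, Nat.factorial_succ (a+1),
                Nat.factorial_succ b, Nat.factorial_succ t]
            push_cast
            ring
          have t4 : ((a+b+t+2+2 : ℕ) : ℂ) * ((Nat.factorial (a+b+2) : ℕ) : ℂ) /
                (((Nat.factorial (a+1) : ℕ) : ℂ) * ((Nat.factorial (b+2) : ℕ) : ℂ)) *
                (((b+t+2).choose (b+1) : ℕ) : ℂ) =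
              (((a:ℂ)+(b:ℂ)+(t:ℂ)+4)*((Nat.factorial (a+b+2) : ℕ) : ℂ)*((b:ℂ)+(t:ℂ)+2)*((Nat.factorial (b+t+1) : ℕ) : ℂ)*((a:ℂ)+2)) /
                (((a:ℂ)+2)*((b:ℂ)+2)*((b:ℂ)+1)*((b:ℂ)+1)*((t:ℂ)+1) *
                  ((Nat.factorial (a+1) : ℕ) : ℂ) * ((Nat.factorial b : ℕ) : ℂ) *
                  ((Nat.factorial b : ℕ) : ℂ) * ((Nat.factorial t : ℕ) : ℂ)) := by
            rw [cast_choose' (b+t+2) (b+1) (t+1) (by omega), div_mul_div_comm,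
                div_eq_div_iff (mul_ne_zero (mul_ne_zero fA1 fB2) (mul_ne_zero fB1 fT1)) hD,
                show b+2 = (b+1)+1 from by omega, Nat.factorial_succ (b+1),
                Nat.factorial_succ b,
                show b+t+2 = (b+t+1)+1 from by omega, Nat.factorial_succ (b+t+1),
                Nat.factorial_succ t]
            push_cast
            ring
          have t5 : ((a+b+t+2+1 : ℕ) : ℂ) * ((Nat.factorial (a+b+2) : ℕ) : ℂ) /
                (((Nat.factorial (a+1) : ℕ) : ℂ) * ((Nat.factorial (b+2) : ℕ) : ℂ)) *
                (((b+t+1).choose (b+1) : ℕ) : ℂ) =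
              (((a:ℂ)+(b:ℂ)+(t:ℂ)+3)*((Nat.factorial (a+b+2) : ℕ) : ℂ)*((Nat.factorial (b+t+1) : ℕ) : ℂ)*(((a:ℂ)+2)*((t:ℂ)+1))) /
                (((a:ℂ)+2)*((b:ℂ)+2)*((b:ℂ)+1)*((b:ℂ)+1)*((t:ℂ)+1) *
                  ((Nat.factorial (a+1) : ℕ) : ℂ) * ((Nat.factorial b : ℕ) : ℂ) *
                  ((Nat.factorial b : ℕ) : ℂ) * ((Nat.factorial t : ℕ) : ℂ)) := by
            rw [cast_choose' (b+t+1) (b+1) t (by omega), div_mul_div_comm,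
                div_eq_div_iff (mul_ne_zero (mul_ne_zero fA1 fB2) (mul_ne_zero fB1 fT0)) hD,
                show b+2 = (b+1)+1 from by omega, Nat.factorial_succ (b+1),
                Nat.factorial_succ b]
            push_cast
            ring
          have hN : (((a:ℂ)+(b:ℂ)+(t:ℂ)+5)*((a:ℂ)+(b:ℂ)+3)*((Nat.factorial (a+b+2) : ℕ) : ℂ)*((b:ℂ)+(t:ℂ)+2)*((Nat.factorial (b+t+1) : ℕ) : ℂ)) =
              (((a:ℂ)+(b:ℂ)+(t:ℂ)+4)*((a:ℂ)+(b:ℂ)+3)*((Nat.factorial (a+b+2) : ℕ) : ℂ)*((Nat.factorial (b+t+1) : ℕ) : ℂ)*((t:ℂ)+1)) +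
              (((a:ℂ)+(b:ℂ)+(t:ℂ)+4)*((Nat.factorial (a+b+2) : ℕ) : ℂ)*((Nat.factorial (b+t+1) : ℕ) : ℂ)*(((b:ℂ)+2)*((b:ℂ)+1))) +
              (((a:ℂ)+(b:ℂ)+(t:ℂ)+4)*((Nat.factorial (a+b+2) : ℕ) : ℂ)*((b:ℂ)+(t:ℂ)+2)*((Nat.factorial (b+t+1) : ℕ) : ℂ)*((a:ℂ)+2)) -
              (((a:ℂ)+(b:ℂ)+(t:ℂ)+3)*((Nat.factorial (a+b+2) : ℕ) : ℂ)*((Nat.factorial (b+t+1) : ℕ) : ℂ)*(((a:ℂ)+2)*((t:ℂ)+1))) := by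
            ring
          linear_combination ((-1:ℂ)^(b+1)) * t1 - ((-1:ℂ)^(b+1)) * t2 - ((-1:ℂ)^(b+1)) * t3 -
            ((-1:ℂ)^(b+1)) * t4 + ((-1:ℂ)^(b+1)) * t5 +
            (((-1:ℂ)^(b+1)) / (((a:ℂ)+2)*((b:ℂ)+2)*((b:ℂ)+1)*((b:ℂ)+1)*((t:ℂ)+1) *
                  ((Nat.factorial (a+1) : ℕ) : ℂ) * ((Nat.factorial b : ℕ) : ℂ) *
                  ((Nat.factorial b : ℕ) : ℂ) * ((Nat.factorial t : ℕ) : ℂ))) * hN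
    · -- m + n > k + 3 : everything vanishes
      have hn1 : 1 ≤ n := by omega
      rw [if_neg (by omega : ¬ (m = k+3 ∧ n = 0)), if_pos hn1,
          co_zero _ _ _ (by omega), co_zero _ _ _ (by omega),
          co_zero _ _ _ (by omega), co_zero _ _ _ (by omega),
          co_zero _ _ _ (by omega)]
      ring

lemma SS_rect (r s : ℂ) (l M N : ℕ) (hl : 1 ≤ l) (hM : l ≤ M) (hN : l ≤ N + 2) :
    SS r s l = ∑ m ∈ Finset.Icc 2 M, ∑ n ∈ Finset.range (N + 1),
      co l m n * r ^ (m - 1) * s ^ (n + 1) := by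
  unfold SS
  rw [← Finset.sum_subset (Finset.Icc_subset_Icc_right hM) ?hv]
  case hv =>
    intro m hmM hml
    apply Finset.sum_eq_zero
    intro n _
    simp only [Finset.mem_Icc] at hmM hml
    have hguard : ¬ (m + n ≤ l) := by omega
    rw [co_zero _ _ _ hguard, zero_mul, zero_mul]
  apply Finset.sum_congr rfl
  intro m hm
  simp only [Finset.mem_Icc] at hm
  rw [← Finset.sum_subset (Finset.range_subset_range.2 (by omega : l - m + 1 ≤ N + 1)) ?hv2]
  case hv2 =>
    intro n hn hn2
    simp only [Finset.mem_range] at hn hn2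
    have hguard : ¬ (m + n ≤ l) := by omega
    rw [co_zero _ _ _ hguard, zero_mul, zero_mul]
  apply Finset.sum_congr rfl
  intro n hn
  simp only [Finset.mem_range] at hn
  rw [co_eq _ _ _ (by omega : m + n ≤ l)]

lemma SS_rec (r s : ℂ) (k : ℕ) :
    SS r s (k+3) = ((1 - s) + r) * SS r s (k+2) - r * SS r s (k+1)
      + s * r^(k+2) + r * s * (1-s)^(k+1) := by
  have hB : SS r s (k+2) = ∑ m ∈ Finset.Icc 2 (k+3), ∑ n ∈ Finset.range (k+2),
      co (k+2) m n * r ^ (m-1) * s ^ (n+1) :=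
    SS_rect r s (k+2) (k+3) (k+1) (by omega) (by omega) (by omega)
  have hc : s * SS r s (k+2) = ∑ m ∈ Finset.Icc 2 (k+3), ∑ n ∈ Finset.range (k+2),
      (if 1 ≤ n then co (k+2) m (n-1) else 0) * r ^ (m-1) * s ^ (n+1) := by
    rw [hB, Finset.mul_sum]
    apply Finset.sum_congr rfl
    intro m hm
    simp only [Finset.mem_Icc] at hm
    rw [Finset.mul_sum]
    rw [Finset.sum_range_succ' (fun n => (if 1 ≤ n then co (k+2) m (n-1) else 0) * r^(m-1) * s^(n+1)) (k+1)]
    rw [Finset.sum_range_succ (fun n => s * (co (k+2) m n * r^(m-1) * s^(n+1))) (k+1)]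
    rw [co_zero _ _ _ (by omega : ¬ (m + (k+1) ≤ k+2))]
    rw [if_neg (by omega : ¬ (1:ℕ) ≤ 0)]
    simp only [zero_mul, mul_zero, add_zero]
    apply Finset.sum_congr rfl
    intro i hi
    rw [if_pos (by omega : 1 ≤ i+1), Nat.add_sub_cancel]
    ring
  have hd : ∀ l', 1 ≤ l' → l' ≤ k + 2 →
      r * SS r s l' = ∑ m ∈ Finset.Icc 2 (k+3), ∑ n ∈ Finset.range (k+2),
        (if 3 ≤ m then co l' (m-1) n else 0) * r ^ (m-1) * s ^ (n+1) := by
    intro l' hl1 hl2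
    rw [SS_rect r s l' (k+2) (k+1) hl1 hl2 (by omega), Finset.mul_sum]
    rw [← Finset.Ioc_insert_left (by omega : 2 ≤ k+3), Finset.sum_insert Finset.left_notMem_Ioc]
    rw [show Finset.Ioc 2 (k+3) = Finset.Icc 3 (k+3) from (Finset.Icc_add_one_left_eq_Ioc 2 (k+3)).symm]
    rw [show Finset.Icc 3 (k+3) = Finset.map (addRightEmbedding 1) (Finset.Icc 2 (k+2)) from
        (Finset.map_add_right_Icc 2 (k+2) 1).symm]
    rw [Finset.sum_map]
    have h2 : (∑ n ∈ Finset.range (k+2),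
        (if 3 ≤ 2 then co l' (2-1) n else 0) * r ^ (2-1) * s ^ (n+1)) = 0 := by
      apply Finset.sum_eq_zero
      intro n _
      rw [if_neg (by omega : ¬ (3:ℕ) ≤ 2), zero_mul, zero_mul]
    rw [h2, zero_add]
    apply Finset.sum_congr rfl
    intro m hm
    simp only [Finset.mem_Icc] at hm
    rw [Finset.mul_sum]
    apply Finset.sum_congr rfl
    intro n hn
    simp only [addRightEmbedding_apply]
    rw [if_pos (by omega : 3 ≤ m + 1), Nat.add_sub_cancel]
    have hp : r ^ m = r ^ (m-1) * r := by
      conv_lhs => rw [show m = (m-1)+1 from by omega]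
      rw [pow_succ]
    rw [hp]
    ring
  have hf : s * r^(k+2) = ∑ m ∈ Finset.Icc 2 (k+3), ∑ n ∈ Finset.range (k+2),
      (if m = k+3 ∧ n = 0 then 1 else 0) * r ^ (m-1) * s ^ (n+1) := by
    rw [Finset.sum_eq_single_of_mem (k+3) (by simp only [Finset.mem_Icc]; omega) ?hz]
    case hz =>
      intro m hm hne
      apply Finset.sum_eq_zero
      intro n _
      rw [if_neg (by simp [hne]), zero_mul, zero_mul]
    rw [Finset.sum_eq_single_of_mem 0 (by simp) ?hz2]
    case hz2 =>
      intro n hn hne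
      rw [if_neg (by simp [hne]), zero_mul, zero_mul]
    rw [if_pos ⟨rfl, rfl⟩, one_mul, pow_one,
        show k+3-1 = k+2 from by omega]
    ring
  have hg : r * s * (1-s)^(k+1) = ∑ m ∈ Finset.Icc 2 (k+3), ∑ n ∈ Finset.range (k+2),
      (if m = 2 then (((k+1).choose n : ℕ) : ℂ) * (-1)^n else 0) * r ^ (m-1) * s ^ (n+1) := by
    rw [Finset.sum_eq_single_of_mem 2 (by simp [Finset.mem_Icc]) ?hz]
    case hz =>
      intro m hm hne
      apply Finset.sum_eq_zero
      intro n _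
      rw [if_neg hne, zero_mul, zero_mul]
    rw [show (1:ℂ) - s = -s + 1 from by ring, add_pow]
    rw [Finset.mul_sum]
    apply Finset.sum_congr rfl
    intro n hn
    rw [if_pos rfl, one_pow, neg_pow]
    ring
  rw [SS_rect r s (k+3) (k+3) (k+1) (by omega) (by omega) (by omega),
      show ((1 - s) + r) * SS r s (k+2) = SS r s (k+2) - s * SS r s (k+2) + r * SS r s (k+2) from by ring,
      hc, hd (k+2) (by omega) (by omega), hd (k+1) (by omega) (by omega), hf, hg, hB]
  simp only [← Finset.sum_sub_distrib, ← Finset.sum_add_distrib]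
  apply Finset.sum_congr rfl
  intro m hm
  simp only [Finset.mem_Icc] at hm
  apply Finset.sum_congr rfl
  intro n hn
  simp only [Finset.mem_range] at hn
  rw [co_rec k m n hm.1 hm.2 (by omega)]
  ring

lemma key (p q : ℂ) : ∀ k : ℕ,
    (SS (p*q) ((p-1)*(q-1)) (k+1) = (p+q-p*q)^(k+1) + (p*q)^(k+1) - p^(k+1) - q^(k+1)) ∧
    (SS (p*q) ((p-1)*(q-1)) (k+2) = (p+q-p*q)^(k+2) + (p*q)^(k+2) - p^(k+2) - q^(k+2)) := by
  intro k
  induction k with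
  | zero =>
    constructor
    · unfold SS
      rw [Finset.Icc_eq_empty (by omega : ¬ (2:ℕ) ≤ 0+1), Finset.sum_empty]
      ring
    · unfold SS
      rw [show (0:ℕ)+2 = 2 from rfl, Finset.Icc_self, Finset.sum_singleton,
          show (2:ℕ)-2+1 = 1 from rfl, Finset.sum_range_one]
      norm_num [Nat.factorial]
      ring
  | succ k ih =>
    refine ⟨ih.2, ?_⟩
    have hrec := SS_rec (p*q) ((p-1)*(q-1)) k
    rw [show k+1+2 = k+3 from rfl, hrec, ih.1, ih.2,
        show (1:ℂ) - (p-1)*(q-1) = p+q-p*q from by ring]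
    ring

lemma coeff_eq (l m n : ℕ) (hm : 2 ≤ m) :
    ((l : ℂ) / ((m : ℂ) - 1)) * (((m + n - 1).choose (n + 1) : ℕ) : ℂ) =
    (l : ℂ) * ((Nat.factorial (m + n - 1) : ℕ) : ℂ) /
        (((Nat.factorial (m - 1) : ℕ) : ℂ) * ((Nat.factorial (n + 1) : ℕ) : ℂ)) := by
  obtain ⟨a, rfl⟩ := Nat.exists_eq_add_of_le hm
  have e1 : ((2 + a : ℕ) : ℂ) - 1 = ((a + 1 : ℕ) : ℂ) := by push_cast; ring
  rw [e1,
      show 2 + a + n - 1 = (n+1) + a from by omega,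
      show 2 + a - 1 = a + 1 from by omega,
      cast_choose_add (n+1) a, Nat.factorial_succ a]
  have d1 : ((a + 1 : ℕ) : ℂ) ≠ 0 := Nat.cast_ne_zero.2 (by omega)
  rw [Nat.cast_mul]
  field_simp

open Finset in
/-- with λ = x2/x1, C_m = λ^{2m-2} C_1, C_1 = λ(x1-x1⁻¹)(x2-x2⁻¹),
the polynomial 𝒫_l(C_1,…,C_l) equals λ^l (x1^l - x1^{-l})(x2^l - x2^{-l}). -/
theorem central_polynomial_identity (l : ℕ) (hl : Odd l) (hlpos : 0 < l)
    (x1 x2 lam : ℂ) (h1 : x1 ≠ 0) (h2 : x2 ≠ 0) (hlam : lam = x2 / x1)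
    (C : ℕ → ℂ)
    (hC : ∀ m : ℕ, 1 ≤ m →
      C m = lam ^ (2 * m - 2) * (lam * (x1 - x1⁻¹) * (x2 - x2⁻¹))) :
    (C 1 + 1) ^ l - 1 +
      ∑ m ∈ Finset.Icc 2 l, ∑ n ∈ Finset.range (l - m + 1),
        C m * (C 1) ^ n * ((l : ℂ) / ((m : ℂ) - 1)) *
          (Nat.choose (m + n - 1) (n + 1) : ℂ) * (Nat.choose (l - m) n : ℂ) =
    lam ^ l * (x1 ^ l - x1⁻¹ ^ l) * (x2 ^ l - x2⁻¹ ^ l) := by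
  have hx1l : x1^l ≠ 0 := pow_ne_zero _ h1
  have hx2l : x2^l ≠ 0 := pow_ne_zero _ h2
  have hX : lam * (x1 - x1⁻¹) * (x2 - x2⁻¹) = C 1 := by
    rw [hC 1 le_rfl]
    norm_num
  have hC1 : C 1 = -((x2^2-1)*(x1⁻¹^2-1)) := by
    rw [← hX, hlam]
    field_simp
    ring
  have hlam2 : lam^2 = x2^2 * x1⁻¹^2 := by
    rw [hlam, div_eq_mul_inv, mul_pow]
  have hCm : ∀ m : ℕ, 2 ≤ m → C m = (x2^2 * x1⁻¹^2)^(m-1) * C 1 := by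
    intro m hm
    rw [hC m (by omega), show 2*m-2 = 2*(m-1) from by omega, pow_mul, hlam2, hX]
  have hsum : (∑ m ∈ Finset.Icc 2 l, ∑ n ∈ Finset.range (l - m + 1),
        C m * (C 1) ^ n * ((l : ℂ) / ((m : ℂ) - 1)) *
          (Nat.choose (m + n - 1) (n + 1) : ℂ) * (Nat.choose (l - m) n : ℂ))
      = -SS (x2^2 * x1⁻¹^2) ((x2^2-1)*(x1⁻¹^2-1)) l := by
    unfold SS
    rw [← Finset.sum_neg_distrib]
    apply Finset.sum_congr rfl
    intro m hm
    simp only [Finset.mem_Icc] at hm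
    rw [← Finset.sum_neg_distrib]
    apply Finset.sum_congr rfl
    intro n _
    rw [hCm m hm.1, hC1, neg_pow]
    have ce := coeff_eq l m n hm.1
    linear_combination ((x2^2 * x1⁻¹^2)^(m-1) * (-((x2^2-1)*(x1⁻¹^2-1))) *
      ((-1:ℂ)^n * ((x2^2-1)*(x1⁻¹^2-1))^n) * (Nat.choose (l - m) n : ℂ)) * ce
  have hrhs : lam ^ l * (x1 ^ l - x1⁻¹ ^ l) * (x2 ^ l - x2⁻¹ ^ l)
      = (x2^2)^l + (x1⁻¹^2)^l - (x2^2 * x1⁻¹^2)^l - 1 := by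
    rw [hlam, div_pow, mul_pow, pow_right_comm x2 2 l, pow_right_comm x1⁻¹ 2 l,
        inv_pow x1 l, inv_pow x2 l]
    field_simp
    ring
  obtain ⟨k, rfl⟩ : ∃ k, l = k+1 := ⟨l-1, by omega⟩
  have hkey := (key (x2^2) (x1⁻¹^2) k).1
  rw [hsum, hkey, hrhs,
      show C 1 + 1 = 1 - ((x2^2-1)*(x1⁻¹^2-1)) from by rw [hC1]; ring,
      show (1:ℂ) - ((x2^2-1)*(x1⁻¹^2-1)) = x2^2 + x1⁻¹^2 - x2^2*x1⁻¹^2 from by ring]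
  ring
end

section
/- Let q be a primitive l-th root of unity, and let φ, λ1 be nonzero complex numbers and β ∈ ℂ. Define on V = ℂ^l with basis v_0,…,v_{l-1} (indices mod l): k1 v_p = λ1 q^{-2p} v_p, f1 v_p = φ v_{p+1 mod l}, e1 v_p = φ^{-1}([p][μ1 - p + 1] + β) v_{p-1 mod l}, where q^{μ1} = λ1. Then e1 f1 - f1 e1 = (k1 - k1^{-1})/(q - q^{-1}) holds on V if and only if the cyclic boundary condition [l][μ1 - l + 1] type terms vanish; in particular, since q^l = 1, [p+l] = [p] for all p and the relation holds on all of V. -/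
/-- q-number [m] for a natural number m. -/
noncomputable def qNat (q : ℂ) (m : ℕ) : ℂ := (q ^ m - q⁻¹ ^ m) / (q - q⁻¹)

/-- q-number [μ1 + t] = (λ1 q^t - λ1⁻¹ q^{-t})/(q - q⁻¹), where λ1 = q^{μ1}. -/
noncomputable def qMu (q lam1 : ℂ) (t : ℤ) : ℂ :=
  (lam1 * q ^ t - lam1⁻¹ * q ^ (-t)) / (q - q⁻¹)

/-- e1 of the periodic module: e1 v_p = φ⁻¹([p][μ1-p+1] + β) v_{p-1 mod l}. -/
noncomputable def E1per (l : ℕ) (q lam1 φ β : ℂ) : Matrix (Fin l) (Fin l) ℂ :=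
  Matrix.of fun i j =>
    if ((i : ℕ) + 1) % l = (j : ℕ) then
      φ⁻¹ * (qNat q (j : ℕ) * qMu q lam1 (1 - (j : ℕ)) + β) else 0

/-- f1 of the periodic module: f1 v_p = φ v_{p+1 mod l}. -/
noncomputable def F1per (l : ℕ) (φ : ℂ) : Matrix (Fin l) (Fin l) ℂ :=
  Matrix.of fun i j => if ((j : ℕ) + 1) % l = (i : ℕ) then φ else 0

/-- k1 of the periodic module: k1 v_p = λ1 q^{-2p} v_p. -/
noncomputable def K1per (l : ℕ) (q lam1 : ℂ) : Matrix (Fin l) (Fin l) ℂ :=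
  Matrix.diagonal fun p : Fin l => lam1 * q ^ (-2 * ((p : ℕ) : ℤ))

/-- k1⁻¹ of the periodic module: k1⁻¹ v_p = λ1⁻¹ q^{2p} v_p. -/
noncomputable def K1invper (l : ℕ) (q lam1 : ℂ) : Matrix (Fin l) (Fin l) ℂ :=
  Matrix.diagonal fun p : Fin l => lam1⁻¹ * q ^ (2 * ((p : ℕ) : ℤ))

lemma pow_val_mod {q : ℂ} {l : ℕ} (hql : q ^ l = 1) (a : ℕ) : q ^ (a % l) = q ^ a := by
  conv_rhs => rw [← Nat.mod_add_div a l, pow_add, pow_mul, hql, one_pow, mul_one]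

lemma zpow_neg_two_nat {q : ℂ} (p : ℕ) : q ^ (-2 * (p : ℤ)) = ((q ^ p) ^ 2)⁻¹ := by
  rw [← inv_pow, inv_pow, ← pow_mul, ← zpow_natCast q (p * 2), ← zpow_neg]
  congr 1; push_cast; ring

lemma zpow_two_nat {q : ℂ} (p : ℕ) : q ^ (2 * (p : ℤ)) = (q ^ p) ^ 2 := by
  rw [← pow_mul, ← zpow_natCast q (p * 2)]
  congr 1; push_cast; ring

/-- The key algebraic step: [p+1][μ-p] - [p][μ-p+1] = [μ-2p]. -/
lemma step (q lam1 : ℂ) (hq : q ≠ 0) (hs : q - q⁻¹ ≠ 0) (p : ℕ) :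
    qNat q (p + 1) * qMu q lam1 (1 - ((p : ℤ) + 1)) - qNat q p * qMu q lam1 (1 - (p : ℤ)) =
      (q - q⁻¹)⁻¹ * (lam1 * q ^ (-2 * (p : ℤ)) - lam1⁻¹ * q ^ (2 * (p : ℤ))) := by
  simp only [qNat, qMu]
  have e1 : (1 - ((p : ℤ) + 1)) = -(p : ℤ) := by ring
  have e3 : (-(1 - (p : ℤ))) = (p : ℤ) - 1 := by ring
  rw [e1, neg_neg]
  rw [zpow_neg, zpow_natCast, e3, zpow_sub₀ hq, zpow_sub₀ hq, zpow_one]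
  rw [zpow_neg_two_nat, zpow_two_nat]
  rw [div_mul_div_comm, div_mul_div_comm, div_sub_div_same, inv_mul_eq_div (q - q⁻¹),
    div_eq_div_iff (mul_ne_zero hs hs) hs]
  simp only [zpow_natCast, pow_succ, inv_pow]
  ring

/-- The diagonal identity, including the cyclic boundary case p + 1 = l. -/
lemma diag_key (l : ℕ) (q lam1 β : ℂ) (hq0 : q ≠ 0) (hql : q ^ l = 1)
    (p : ℕ) (hp : p < l) :
    (qNat q ((p + 1) % l) * qMu q lam1 (1 - (((p + 1) % l : ℕ) : ℤ)) + β) -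
      (qNat q p * qMu q lam1 (1 - (p : ℤ)) + β) =
    (q - q⁻¹)⁻¹ * (lam1 * q ^ (-2 * (p : ℤ)) - lam1⁻¹ * q ^ (2 * (p : ℤ))) := by
  by_cases hs : q - q⁻¹ = 0
  · simp [qNat, qMu, hs]
  · have h := step q lam1 hq0 hs p
    rcases lt_or_eq_of_le (Nat.succ_le_of_lt hp) with h1 | h1
    · rw [Nat.mod_eq_of_lt h1]
      push_cast
      linear_combination h
    · have h1' : p + 1 = l := by omega
      rw [h1', Nat.mod_self]
      have hz0 : qNat q 0 = 0 := by simp [qNat]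
      have hzl : qNat q l = 0 := by
        have hinv : (q⁻¹) ^ l = 1 := by rw [inv_pow, hql, inv_one]
        simp [qNat, hql, hinv]
      rw [h1'] at h
      rw [hzl, zero_mul] at h
      rw [hz0]
      push_cast
      linear_combination h

lemma succ_mod_back {l : ℕ} (c : ℕ) (hc : c < l) : ((c + 1) % l + (l - 1)) % l = c := by
  rw [Nat.mod_add_mod]
  have h : c + 1 + (l - 1) = c + l := by omega
  rw [h, Nat.add_mod_right, Nat.mod_eq_of_lt hc]

lemma succ_mod_inj {l : ℕ} {a b : ℕ} (ha : a < l) (hb : b < l)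
    (h : (a + 1) % l = (b + 1) % l) : a = b := by
  have h1 := succ_mod_back a ha
  rw [h, succ_mod_back b hb] at h1
  exact h1.symm

/-- the periodic representation of Uq(sl(2)) (q a primitive l-th
root of unity) satisfies k e1 k⁻¹ = q² e1, k f1 k⁻¹ = q⁻² f1 and
e1 f1 - f1 e1 = (k1 - k1⁻¹)/(q - q⁻¹) on all of V. -/
theorem periodic_sl2_relations (l : ℕ) (hl : 2 ≤ l) (q : ℂ)
    (hq : IsPrimitiveRoot q l) (φ lam1 β : ℂ) (hφ : φ ≠ 0) (hlam1 : lam1 ≠ 0) :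
    K1per l q lam1 * E1per l q lam1 φ β * K1invper l q lam1 =
        (q ^ 2) • E1per l q lam1 φ β ∧
    K1per l q lam1 * F1per l φ * K1invper l q lam1 =
        (q ^ (-2 : ℤ)) • F1per l φ ∧
    E1per l q lam1 φ β * F1per l φ - F1per l φ * E1per l q lam1 φ β =
        (q - q⁻¹)⁻¹ • (K1per l q lam1 - K1invper l q lam1) := by
  have hl0 : 0 < l := by omega
  have hql : q ^ l = 1 := hq.pow_eq_one
  have hq0 : q ≠ 0 := by
    intro h
    rw [h, zero_pow (by omega : l ≠ 0)] at hql
    exact zero_ne_one hql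
  refine ⟨?_, ?_, ?_⟩
  · -- K E K⁻¹ = q² E
    ext i j
    rw [Matrix.mul_assoc]
    simp only [K1per, K1invper, Matrix.diagonal_mul, Matrix.mul_diagonal,
      Matrix.smul_apply, smul_eq_mul, E1per, Matrix.of_apply]
    split_ifs with h
    · have hj : q ^ (j : ℕ) = q ^ ((i : ℕ) + 1) := by rw [← h, pow_val_mod hql]
      have hA : q ^ (i : ℕ) ≠ 0 := pow_ne_zero _ hq0
      rw [zpow_neg_two_nat, zpow_two_nat, hj, pow_succ]
      field_simp
      ring
    · simp
  · -- K F K⁻¹ = q⁻² F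
    ext i j
    rw [Matrix.mul_assoc]
    simp only [K1per, K1invper, Matrix.diagonal_mul, Matrix.mul_diagonal,
      Matrix.smul_apply, smul_eq_mul, F1per, Matrix.of_apply]
    split_ifs with h
    · have hi : q ^ (i : ℕ) = q ^ ((j : ℕ) + 1) := by rw [← h, pow_val_mod hql]
      have hA : q ^ (j : ℕ) ≠ 0 := pow_ne_zero _ hq0
      rw [zpow_neg_two_nat, zpow_two_nat, hi, pow_succ]
      rw [show ((-2 : ℤ)) = -(2 : ℤ) from rfl, zpow_neg, show ((2:ℤ)) = ((2:ℕ):ℤ) from rfl,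
        zpow_natCast]
      field_simp
      ring
    · simp
  · -- E F - F E = (q - q⁻¹)⁻¹ (K - K⁻¹)
    ext i j
    set si : Fin l := ⟨((i : ℕ) + 1) % l, Nat.mod_lt _ hl0⟩ with hsi
    set ti : Fin l := ⟨((i : ℕ) + (l - 1)) % l, Nat.mod_lt _ hl0⟩ with hti
    have hsum1 : (E1per l q lam1 φ β * F1per l φ) i j =
        (φ⁻¹ * (qNat q ((si : Fin l) : ℕ) * qMu q lam1 (1 - (((si : Fin l) : ℕ) : ℤ)) + β)) *
          F1per l φ si j := by
      rw [Matrix.mul_apply]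
      rw [Finset.sum_eq_single_of_mem si (Finset.mem_univ si)]
      · congr 1
        simp [E1per, show ((i : ℕ) + 1) % l = (si : ℕ) from rfl]
      · intro x _ hx
        have hcond : ¬(((i : ℕ) + 1) % l = (x : ℕ)) := by
          intro hcon
          exact hx (Fin.ext (by rw [← hcon]))
        simp [E1per, hcond]
    have htival : (((ti : Fin l) : ℕ) + 1) % l = (i : ℕ) := by
      show (((i : ℕ) + (l - 1)) % l + 1) % l = (i : ℕ)
      rw [Nat.mod_add_mod]
      have h : (i : ℕ) + (l - 1) + 1 = (i : ℕ) + l := by omega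
      rw [h, Nat.add_mod_right, Nat.mod_eq_of_lt i.isLt]
    have hsum2 : (F1per l φ * E1per l q lam1 φ β) i j =
        φ * E1per l q lam1 φ β ti j := by
      rw [Matrix.mul_apply]
      rw [Finset.sum_eq_single_of_mem ti (Finset.mem_univ ti)]
      · congr 1
        simp [F1per, htival]
      · intro x _ hx
        have hcond : ¬(((x : ℕ) + 1) % l = (i : ℕ)) := by
          intro hcon
          apply hx
          apply Fin.ext
          show (x : ℕ) = ((i : ℕ) + (l - 1)) % l
          rw [← hcon]
          exact (succ_mod_back (x : ℕ) x.isLt).symm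
        simp [F1per, hcond]
    rw [Matrix.sub_apply, hsum1, hsum2, Matrix.smul_apply, Matrix.sub_apply]
    simp only [K1per, K1invper, Matrix.diagonal_apply, smul_eq_mul]
    by_cases hij : i = j
    · subst hij
      have hF : F1per l φ si i = φ := by
        simp [F1per, show ((i : ℕ) + 1) % l = (si : ℕ) from rfl]
      have hE : E1per l q lam1 φ β ti i =
          φ⁻¹ * (qNat q (i : ℕ) * qMu q lam1 (1 - ((i : ℕ) : ℤ)) + β) := by
        simp [E1per, htival]
      rw [hF, hE, if_pos rfl, if_pos rfl]
      have hd := diag_key l q lam1 β hq0 hql (i : ℕ) i.isLt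
      have hc1 : ∀ X : ℂ, φ⁻¹ * X * φ = X := fun X => by field_simp
      have hc2 : ∀ X : ℂ, φ * (φ⁻¹ * X) = X := fun X => by field_simp
      rw [hc1, hc2]
      rw [mul_sub]
      linear_combination hd
    · have hF : F1per l φ si j = 0 := by
        simp only [F1per, Matrix.of_apply]
        rw [if_neg]
        intro hcon
        exact hij (Fin.ext (succ_mod_inj i.isLt j.isLt (by rw [hcon])))
      have hE : E1per l q lam1 φ β ti j = 0 := by
        simp only [E1per, Matrix.of_apply]
        rw [if_neg]
        rw [htival]
        intro hcon
        exact hij (Fin.ext hcon)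
      rw [hF, hE, if_neg hij, if_neg hij]
      ring
end

section
/- With q a primitive l-th root of unity and the periodic Uq(sl(2)) module defined by f1 v_p = φ v_{p+1 mod l}, e1 v_p = φ^{-1}([p][μ1-p+1]+β) v_{p-1 mod l}, k1 v_p = λ1 q^{-2p} v_p: the operator f1^l acts as the scalar φ^l, k1^l acts as the scalar λ1^l, and e1^l acts as the scalar φ^{-l} ∏_{p=1}^{l} ([p][μ1 - p + 1] + β). -/
noncomputable def shiftMat (l : ℕ) [NeZero l] (c : Fin l → ℂ) : Matrix (Fin l) (Fin l) ℂ :=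
  Matrix.of fun i j => if j = i + 1 then c j else 0

open Fin.NatCast Fin.CommRing in
lemma shiftMat_pow (l : ℕ) [NeZero l] (c : Fin l → ℂ) (n : ℕ) :
    (shiftMat l c) ^ n = Matrix.of fun i j =>
      if j = i + (n : Fin l) then ∏ t ∈ Finset.range n, c (i + (t : Fin l) + 1) else 0 := by
  induction n with
  | zero => ext i j; simp [Matrix.one_apply, eq_comm]
  | succ n ih =>
      ext i j
      rw [pow_succ, ih]
      simp only [Matrix.mul_apply, Matrix.of_apply, shiftMat, ite_mul, zero_mul]
      rw [Finset.sum_ite_eq' Finset.univ (i + (n : Fin l))]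
      simp only [Finset.mem_univ, if_true]
      by_cases h : j = i + (n : Fin l) + 1
      · rw [if_pos h, if_pos (by rw [h]; push_cast; ring), Finset.prod_range_succ, h]
      · rw [if_neg h, if_neg (by intro hc; exact h (by rw [hc]; push_cast; ring)), mul_zero]

open Fin.NatCast Fin.CommRing in
lemma shiftMat_pow_self (l : ℕ) [NeZero l] (c : Fin l → ℂ) :
    (shiftMat l c) ^ l = (∏ x : Fin l, c x) • (1 : Matrix (Fin l) (Fin l) ℂ) := by
  rw [shiftMat_pow]
  ext i j
  simp only [Matrix.of_apply, Fin.natCast_self, add_zero, Matrix.smul_apply, Matrix.one_apply]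
  by_cases h : j = i
  · rw [if_pos h, if_pos h.symm, smul_eq_mul, mul_one]
    rw [← Fin.prod_univ_eq_prod_range (fun t => c (i + (t : Fin l) + 1))]
    have key := Equiv.prod_comp (Equiv.addLeft (i + 1)) c
    simp only [Equiv.coe_addLeft] at key
    rw [← key]
    apply Finset.prod_congr rfl
    intro x _
    congr 1
    simp [Fin.cast_val_eq_self]
    ring
  · rw [if_neg h, if_neg (fun hc => h hc.symm), smul_zero]

/-- on the periodic module, f1^l = φ^l, k1^l = λ1^l, and
e1^l = φ^{-l} ∏_{p=1}^{l} ([p][μ1-p+1] + β), as scalars. -/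
theorem periodic_sl2_central_values (l : ℕ) (hl : 2 ≤ l) (q : ℂ)
    (hq : IsPrimitiveRoot q l) (φ lam1 β : ℂ) (hφ : φ ≠ 0) (hlam1 : lam1 ≠ 0) :
    (F1per l φ) ^ l = (φ ^ l) • (1 : Matrix (Fin l) (Fin l) ℂ) ∧
    (K1per l q lam1) ^ l = (lam1 ^ l) • (1 : Matrix (Fin l) (Fin l) ℂ) ∧
    (E1per l q lam1 φ β) ^ l =
      (φ⁻¹ ^ l * ∏ p ∈ Finset.Icc 1 l, (qNat q p * qMu q lam1 (1 - p) + β)) •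
        (1 : Matrix (Fin l) (Fin l) ℂ) := by
  have : NeZero l := ⟨by omega⟩
  have hq1 : q ^ l = 1 := hq.pow_eq_one
  have hcond : ∀ i j : Fin l, (((j : ℕ) + 1) % l = (i : ℕ)) ↔ i = j + 1 := by
    intro i j
    rw [Fin.ext_iff, Fin.add_def, Fin.val_one', Nat.mod_eq_of_lt (show 1 < l by omega), eq_comm]
  refine ⟨?_, ?_, ?_⟩
  · have hF : F1per l φ = (shiftMat l (fun _ => φ)).transpose := by
      ext i j
      simp only [F1per, shiftMat, Matrix.of_apply, Matrix.transpose_apply, hcond]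
    rw [hF, ← Matrix.transpose_pow, shiftMat_pow_self]
    simp [Finset.prod_const]
  · rw [K1per, Matrix.diagonal_pow]
    have hd : ∀ p : Fin l, (lam1 * q ^ (-2 * ((p : ℕ) : ℤ))) ^ l = lam1 ^ l := by
      intro p
      rw [mul_pow, ← zpow_natCast (q ^ (-2 * ((p : ℕ) : ℤ))), ← zpow_mul,
        mul_comm (-2 * ((p : ℕ) : ℤ)), zpow_mul, zpow_natCast, hq1, one_zpow, mul_one]
    ext i j
    simp only [Matrix.diagonal_apply, Matrix.smul_apply, Matrix.one_apply, Pi.pow_apply]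
    by_cases h : i = j
    · rw [if_pos h, if_pos h, smul_eq_mul, mul_one, hd i]
    · rw [if_neg h, if_neg h, smul_zero]
  · have hE : E1per l q lam1 φ β =
        shiftMat l (fun j => φ⁻¹ * (qNat q (j : ℕ) * qMu q lam1 (1 - (j : ℕ)) + β)) := by
      ext i j
      simp only [E1per, shiftMat, Matrix.of_apply, hcond]
    rw [hE, shiftMat_pow_self]
    congr 1
    rw [Finset.prod_mul_distrib, Finset.prod_const, Finset.card_univ, Fintype.card_fin]
    congr 1
    have hQ0 : qNat q 0 * qMu q lam1 (1 - (0 : ℕ)) + β = β := by simp [qNat]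
    have hQl : qNat q l * qMu q lam1 (1 - (l : ℕ)) + β = β := by
      have : qNat q l = 0 := by
        simp [qNat, hq1, inv_pow, hq1]
      simp [this]
    rw [Fin.prod_univ_eq_prod_range (fun p => qNat q p * qMu q lam1 (1 - (p : ℕ)) + β),
      Finset.range_eq_Ico,
      Finset.prod_eq_prod_Ico_succ_bot (show 0 < l by omega), hQ0,
      ← Finset.Ico_add_one_right_eq_Icc, Finset.prod_Ico_succ_top (show 1 ≤ l by omega), hQl]
    push_cast
    ring
end

section
/- Let q be a primitive l-th root of unity with l odd. In the commutative polynomial setting, define the Casimir value c(λ1, β) = q λ1 + q^{-1} λ1^{-1} + (q - q^{-1})² β. Then 2 P_l(c/2) = λ1^l + λ1^{-l} + (q - q^{-1})^{2l} ∏_{p=1}^{l} ([p][μ1 - p + 1] + β), where P_l is the l-th Chebyshev polynomial of the first kind, λ1 = q^{μ1}, [p] = (q^p - q^{-p})/(q - q^{-1}), and [μ1 - p + 1] = (λ1 q^{1-p} - λ1^{-1} q^{p-1})/(q - q^{-1}). -/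
lemma chebA (z : ℂ) (hz : z ≠ 0) : ∀ n : ℕ,
    2 * (Polynomial.Chebyshev.T ℂ (n : ℤ)).eval ((z + z⁻¹)/2) = z ^ n + z⁻¹ ^ n := by
  have hzz : z * z⁻¹ = 1 := mul_inv_cancel₀ hz
  intro n
  induction n using Nat.twoStepInduction with
  | zero => norm_num [Polynomial.Chebyshev.T_zero]
  | one =>
    simp only [Nat.cast_one, Polynomial.Chebyshev.T_one, Polynomial.eval_X, pow_one]
    ring
  | more n ih0 ih1 =>
    have hc : ((n + 2 : ℕ) : ℤ) = (n : ℤ) + 2 := by push_cast; ring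
    have hc1 : ((n + 1 : ℕ) : ℤ) = (n : ℤ) + 1 := by push_cast; ring
    rw [hc1] at ih1
    rw [hc, Polynomial.Chebyshev.T_add_two]
    simp only [Polynomial.eval_sub, Polynomial.eval_mul, Polynomial.eval_ofNat,
      Polynomial.eval_X]
    linear_combination (z + z⁻¹) * ih1 - ih0 + (z ^ n + z⁻¹ ^ n) * hzz

lemma img_eq (l : ℕ) (hlpos : 0 < l) (q : ℂ) (hq : IsPrimitiveRoot q l)
    (e : ℕ → ℤ)
    (he : ∀ p ∈ Finset.Icc 1 l, ∀ p' ∈ Finset.Icc 1 l, (l:ℤ) ∣ e p - e p' → p = p') :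
    (Finset.Icc 1 l).image (fun p => q ^ (e p)) = Polynomial.nthRootsFinset l (1 : ℂ) := by
  have hq0 : q ≠ 0 := hq.ne_zero hlpos.ne'
  have hinj : ∀ p ∈ Finset.Icc 1 l, ∀ p' ∈ Finset.Icc 1 l,
      q ^ (e p) = q ^ (e p') → p = p' := by
    intro p hp p' hp' hpq
    refine he p hp p' hp' ?_
    rw [← hq.zpow_eq_one_iff_dvd]
    rw [zpow_sub₀ hq0, hpq, div_self (zpow_ne_zero _ hq0)]
  apply Finset.eq_of_subset_of_card_le
  · intro x hx
    simp only [Finset.mem_image] at hx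
    obtain ⟨p, hp, rfl⟩ := hx
    rw [Polynomial.mem_nthRootsFinset hlpos (1 : ℂ)]
    rw [← zpow_natCast (q ^ e p) l, ← zpow_mul, mul_comm, zpow_mul, zpow_natCast,
      hq.pow_eq_one, one_zpow]
  · rw [hq.card_nthRootsFinset, Finset.card_image_of_injOn hinj, Nat.card_Icc]
    omega

lemma prod_root (l : ℕ) (hl : Odd l) (hlpos : 0 < l) (q : ℂ) (hq : IsPrimitiveRoot q l)
    (e : ℕ → ℤ)
    (heb : ∀ p p' : ℕ, e p - e p' = 2 * ((p':ℤ) - p) ∨ e p - e p' = 2 * ((p:ℤ) - p'))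
    (z a : ℂ) :
    ∏ p ∈ Finset.Icc 1 l, (z - q ^ (e p) * a) = z ^ l - a ^ l := by
  have hcop : IsCoprime (l:ℤ) 2 := by
    rw [Int.isCoprime_iff_gcd_eq_one, show (2:ℤ) = ((2:ℕ):ℤ) from rfl,
      Int.gcd_natCast_natCast]
    exact hl.coprime_two_right
  have he : ∀ p ∈ Finset.Icc 1 l, ∀ p' ∈ Finset.Icc 1 l, (l:ℤ) ∣ e p - e p' → p = p' := by
    intro p hp p' hp' hdvd
    simp only [Finset.mem_Icc] at hp hp'
    rcases heb p p' with h | h <;> rw [h] at hdvd <;>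
    · have h2 : (l:ℤ) ∣ _ := hcop.dvd_of_dvd_mul_left hdvd
      have := Int.eq_zero_of_dvd_of_natAbs_lt_natAbs h2 (by omega)
      omega
  calc ∏ p ∈ Finset.Icc 1 l, (z - q ^ (e p) * a)
      = ∏ w ∈ (Finset.Icc 1 l).image (fun p => q ^ (e p)), (z - w * a) := by
        rw [Finset.prod_image]
        intro p hp p' hp' hpq
        refine he p hp p' hp' ?_
        beta_reduce at hpq
        rw [← hq.zpow_eq_one_iff_dvd, zpow_sub₀ (hq.ne_zero hlpos.ne'), hpq,
          div_self (zpow_ne_zero _ (hq.ne_zero hlpos.ne'))]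
    _ = ∏ w ∈ Polynomial.nthRootsFinset l (1 : ℂ), (z - w * a) := by
        rw [img_eq l hlpos q hq e he]
    _ = z ^ l - a ^ l := (hq.pow_sub_pow_eq_prod_sub_mul z a hlpos).symm

/-- for q a primitive l-th root of unity (l odd), with Casimir
value c = q λ1 + q⁻¹ λ1⁻¹ + (q-q⁻¹)² β, one has
2 P_l(c/2) = λ1^l + λ1^{-l} + (q-q⁻¹)^{2l} ∏_{p=1}^{l} ([p][μ1-p+1] + β). -/
theorem chebyshev_casimir_relation (l : ℕ) (hl : Odd l) (hlpos : 0 < l)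
    (q : ℂ) (hq : IsPrimitiveRoot q l) (lam1 β : ℂ) (hlam1 : lam1 ≠ 0) :
    2 * (Polynomial.Chebyshev.T ℂ (l : ℤ)).eval
        ((q * lam1 + q⁻¹ * lam1⁻¹ + (q - q⁻¹) ^ 2 * β) / 2) =
      lam1 ^ l + lam1⁻¹ ^ l +
        (q - q⁻¹) ^ (2 * l) *
          ∏ p ∈ Finset.Icc 1 l, (qNat q p * qMu q lam1 (1 - p) + β) := by
  have hq0 : q ≠ 0 := hq.ne_zero hlpos.ne'
  set c : ℂ := q * lam1 + q⁻¹ * lam1⁻¹ + (q - q⁻¹) ^ 2 * β with hc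
  rcases eq_or_ne l 1 with rfl | hl1
  · have hq1 : q = 1 := by simpa using hq.pow_eq_one
    subst hq1
    simp only [Nat.cast_one, Polynomial.Chebyshev.T_one, Polynomial.eval_X, hc]
    norm_num
    ring
  · -- l ≥ 3, so q² ≠ 1 and q - q⁻¹ ≠ 0
    have hε : q - q⁻¹ ≠ 0 := by
      intro h
      have hq2 : q ^ 2 = 1 := by
        rw [sq]
        nth_rewrite 2 [sub_eq_zero.mp h]
        exact mul_inv_cancel₀ hq0
      have h2 := hq.dvd_of_pow_eq_one 2 hq2
      have h3 := Nat.le_of_dvd (by norm_num) h2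
      have h4 := Nat.odd_iff.mp hl
      omega
    obtain ⟨s, hs⟩ := IsAlgClosed.exists_pow_nat_eq (c ^ 2 - 4) zero_lt_two
    set z : ℂ := (c + s) / 2 with hzdef
    have hzq : z ^ 2 - c * z + 1 = 0 := by
      rw [hzdef]; linear_combination hs / 4
    have hz0 : z ≠ 0 := by
      intro h; rw [h] at hzq; norm_num at hzq
    have hzz : z * z⁻¹ = 1 := mul_inv_cancel₀ hz0
    have hzc : z + z⁻¹ = c := by
      field_simp
      linear_combination hzq
    have hcard : (Finset.Icc 1 l).card = l := by rw [Nat.card_Icc]; omega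
    -- step 1: per-term identity without z
    have hterm1 : ∀ p : ℕ, (q - q⁻¹) ^ 2 * (qNat q p * qMu q lam1 (1 - (p:ℤ)) + β)
        = c - q ^ (1 - 2 * (p:ℤ)) * lam1 - q ^ (2 * (p:ℤ) - 1) * lam1⁻¹ := by
      intro p
      have hp2 : (2 : ℤ) * (p:ℤ) = ((2 * p : ℕ) : ℤ) := by push_cast; ring
      simp only [qNat, qMu, neg_sub, hc]
      rw [div_mul_div_comm, ← sq, mul_add, mul_div_cancel₀ _ (pow_ne_zero 2 hε)]
      rw [zpow_sub₀ hq0, zpow_sub₀ hq0, zpow_sub₀ hq0, zpow_sub₀ hq0, hp2]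
      simp only [zpow_natCast, zpow_one, inv_pow, pow_mul']
      obtain ⟨P, hg⟩ : ∃ P, q ^ p = P := ⟨_, rfl⟩
      rw [hg]
      have hP0 : P ≠ 0 := hg ▸ pow_ne_zero p hq0
      have hPP : P * P⁻¹ = 1 := mul_inv_cancel₀ hP0
      linear_combination (q * lam1 + q⁻¹ * lam1⁻¹) * hPP
    -- step 2: factorization using z
    have hterm2 : ∀ p : ℕ, c - q ^ (1 - 2 * (p:ℤ)) * lam1 - q ^ (2 * (p:ℤ) - 1) * lam1⁻¹
        = (z - q ^ (1 - 2 * (p:ℤ)) * lam1) * (z - q ^ (2 * (p:ℤ) - 1) * lam1⁻¹) * z⁻¹ := by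
      intro p
      have hW : q ^ (1 - 2 * (p:ℤ)) * q ^ (2 * (p:ℤ) - 1) = 1 := by
        rw [← zpow_add₀ hq0]; norm_num
      have hab : lam1 * lam1⁻¹ = 1 := mul_inv_cancel₀ hlam1
      linear_combination (-1 : ℂ) * hzc
        + (-z + q ^ (1 - 2 * (p:ℤ)) * lam1 + q ^ (2 * (p:ℤ) - 1) * lam1⁻¹) * hzz
        + (-z⁻¹ * lam1 * lam1⁻¹) * hW + (-z⁻¹) * hab
    -- assemble the product
    have hprod : (q - q⁻¹) ^ (2 * l) *
          ∏ p ∈ Finset.Icc 1 l, (qNat q p * qMu q lam1 (1 - (p:ℤ)) + β)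
        = (z ^ l - lam1 ^ l) * (z ^ l - lam1⁻¹ ^ l) * z⁻¹ ^ l := by
      have hsplit : ∏ p ∈ Finset.Icc 1 l,
            ((q - q⁻¹) ^ 2 * (qNat q p * qMu q lam1 (1 - (p:ℤ)) + β))
          = ((q - q⁻¹) ^ 2) ^ l *
            ∏ p ∈ Finset.Icc 1 l, (qNat q p * qMu q lam1 (1 - (p:ℤ)) + β) := by
        rw [Finset.prod_mul_distrib, Finset.prod_const, hcard]
      rw [pow_mul, ← hsplit]
      rw [Finset.prod_congr rfl (fun p _ => (hterm1 p).trans (hterm2 p))]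
      rw [Finset.prod_mul_distrib, Finset.prod_mul_distrib]
      rw [prod_root l hl hlpos q hq (fun p => 1 - 2 * (p:ℤ))
            (fun p p' => Or.inl (by ring)) z lam1,
          prod_root l hl hlpos q hq (fun p => 2 * (p:ℤ) - 1)
            (fun p p' => Or.inr (by ring)) z lam1⁻¹,
          Finset.prod_const, hcard]
    have hzl : z ^ l * z⁻¹ ^ l = 1 := by
      rw [← mul_pow, hzz, one_pow]
    have hll : lam1 ^ l * lam1⁻¹ ^ l = 1 := by
      rw [← mul_pow, mul_inv_cancel₀ hlam1, one_pow]
    rw [show c / 2 = (z + z⁻¹) / 2 by rw [hzc], chebA z hz0 l, hprod]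
    linear_combination (lam1 ^ l + lam1⁻¹ ^ l - z ^ l) * hzl - z⁻¹ ^ l * hll
end

section
/- In an associative ℂ-superalgebra with even elements e1, f1, odd elements e2, f2 satisfying: [e1, f2] = 0 (commutator), [e2, f1] = 0, e2² = f2² = 0, e2 f2 + f2 e2 = (k2 - k2^{-1})/(q - q^{-1}), k1, k2 invertible group-like with k_i e_j k_i^{-1} = q^{a_{ij}} e_j, k_i f_j k_i^{-1} = q^{-a_{ij}} f_j for the Cartan matrix a = [[2,-1],[-1,0]], e1 f1 - f1 e1 = (k1 - k1^{-1})/(q-q^{-1}), and the Serre relations — define e3 = e1 e2 - q^{-1} e2 e1 and f3 = f2 f1 - q f1 f2. Then e3 f3 + f3 e3 = (k1 k2 - k1^{-1} k2^{-1})/(q - q^{-1}). -/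
set_option maxHeartbeats 1000000

private lemma move_right {A : Type*} [Ring A] [Algebra ℂ A] {k ki x : A} {c : ℂ}
    (hki : ki * k = 1) (h : k * x * ki = c • x) : k * x = c • (x * k) := by
  have h2 := congrArg (· * k) h
  simpa [mul_assoc, hki, smul_mul_assoc] using h2

private lemma move_left {A : Type*} [Ring A] [Algebra ℂ A] {k ki x : A} {c : ℂ}
    (hk : k * ki = 1) (hki : ki * k = 1) (hc : c ≠ 0)
    (h : k * x * ki = c • x) : ki * x = c⁻¹ • (x * ki) := by
  have h1 : x * ki = c • (ki * x) := by
    have h2 := congrArg (ki * ·) h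
    rw [mul_assoc k x ki, ← mul_assoc ki k, hki, one_mul, mul_smul_comm] at h2
    exact h2
  rw [h1, smul_smul, inv_mul_cancel₀ hc, one_smul]

private lemma comm_inv {A : Type*} [Ring A] {a ai b : A}
    (ha : a * ai = 1) (ha' : ai * a = 1) (h : a * b = b * a) : ai * b = b * ai := by
  have h2 : ai * (a * b * ai) = ai * (b * a * ai) := by rw [h]
  rw [mul_assoc a b ai, ← mul_assoc ai a, ha', one_mul] at h2
  rw [mul_assoc b a ai, ha, mul_one] at h2
  exact h2.symm

/-- in Uq(sl(2|1)) (presented by its generators and relations),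
with e3 = e1 e2 - q⁻¹ e2 e1 and f3 = f2 f1 - q f1 f2, one has
e3 f3 + f3 e3 = (k1 k2 - k1⁻¹ k2⁻¹)/(q - q⁻¹). -/
theorem e3_f3_anticommutator {A : Type*} [Ring A] [Algebra ℂ A]
    (q : ℂ) (hq0 : q ≠ 0) (hq2 : q ^ 2 ≠ 1)
    (k1 k1i k2 k2i e1 e2 f1 f2 : A)
    (hk1 : k1 * k1i = 1) (hk1' : k1i * k1 = 1)
    (hk2 : k2 * k2i = 1) (hk2' : k2i * k2 = 1)
    (hkk : k1 * k2 = k2 * k1)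
    (h11e : k1 * e1 * k1i = (q ^ 2) • e1) (h12e : k1 * e2 * k1i = q⁻¹ • e2)
    (h21e : k2 * e1 * k2i = q⁻¹ • e1) (h22e : k2 * e2 * k2i = e2)
    (h11f : k1 * f1 * k1i = (q ^ 2)⁻¹ • f1) (h12f : k1 * f2 * k1i = q • f2)
    (h21f : k2 * f1 * k2i = q • f1) (h22f : k2 * f2 * k2i = f2)
    (hef1 : e1 * f1 - f1 * e1 = (q - q⁻¹)⁻¹ • (k1 - k1i))
    (hef2 : e2 * f2 + f2 * e2 = (q - q⁻¹)⁻¹ • (k2 - k2i))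
    (he1f2 : e1 * f2 = f2 * e1) (he2f1 : e2 * f1 = f1 * e2)
    (he2sq : e2 ^ 2 = 0) (hf2sq : f2 ^ 2 = 0)
    (hserree : e1 ^ 2 * e2 - (q + q⁻¹) • (e1 * e2 * e1) + e2 * e1 ^ 2 = 0)
    (hserref : f1 ^ 2 * f2 - (q + q⁻¹) • (f1 * f2 * f1) + f2 * f1 ^ 2 = 0)
    (e3 f3 : A) (he3 : e3 = e1 * e2 - q⁻¹ • (e2 * e1))
    (hf3 : f3 = f2 * f1 - q • (f1 * f2)) :
    e3 * f3 + f3 * e3 = (q - q⁻¹)⁻¹ • (k1 * k2 - k1i * k2i) := by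
  subst he3 hf3
  have hqi : q⁻¹ ≠ 0 := inv_ne_zero hq0
  have hqd : q - q⁻¹ ≠ 0 := by
    intro h
    apply hq2
    have h' : q = q⁻¹ := sub_eq_zero.mp h
    rw [sq]
    nth_rewrite 2 [h']
    exact mul_inv_cancel₀ hq0
  set t : ℂ := (q - q⁻¹)⁻¹ with ht
  -- k-move rules
  have m1 : k1 * e2 = q⁻¹ • (e2 * k1) := move_right hk1' h12e
  have m2 : k1i * e2 = q • (e2 * k1i) := by
    have := move_left hk1 hk1' hqi h12e; rwa [inv_inv] at this
  have m3 : k1 * f2 = q • (f2 * k1) := move_right hk1' h12f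
  have m4 : k1i * f2 = q⁻¹ • (f2 * k1i) := move_left hk1 hk1' hq0 h12f
  have m5 : k2 * e1 = q⁻¹ • (e1 * k2) := move_right hk2' h21e
  have m6 : k2i * e1 = q • (e1 * k2i) := by
    have := move_left hk2 hk2' hqi h21e; rwa [inv_inv] at this
  have m7 : k2 * f1 = q • (f1 * k2) := move_right hk2' h21f
  have m8 : k2i * f1 = q⁻¹ • (f1 * k2i) := move_left hk2 hk2' hq0 h21f
  have m1x : ∀ x : A, k1 * (e2 * x) = q⁻¹ • (e2 * (k1 * x)) := fun x => by
    rw [← mul_assoc, m1, smul_mul_assoc, mul_assoc]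
  have m2x : ∀ x : A, k1i * (e2 * x) = q • (e2 * (k1i * x)) := fun x => by
    rw [← mul_assoc, m2, smul_mul_assoc, mul_assoc]
  have m3x : ∀ x : A, k1 * (f2 * x) = q • (f2 * (k1 * x)) := fun x => by
    rw [← mul_assoc, m3, smul_mul_assoc, mul_assoc]
  have m4x : ∀ x : A, k1i * (f2 * x) = q⁻¹ • (f2 * (k1i * x)) := fun x => by
    rw [← mul_assoc, m4, smul_mul_assoc, mul_assoc]
  have m5x : ∀ x : A, k2 * (e1 * x) = q⁻¹ • (e1 * (k2 * x)) := fun x => by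
    rw [← mul_assoc, m5, smul_mul_assoc, mul_assoc]
  have m6x : ∀ x : A, k2i * (e1 * x) = q • (e1 * (k2i * x)) := fun x => by
    rw [← mul_assoc, m6, smul_mul_assoc, mul_assoc]
  have m7x : ∀ x : A, k2 * (f1 * x) = q • (f1 * (k2 * x)) := fun x => by
    rw [← mul_assoc, m7, smul_mul_assoc, mul_assoc]
  have m8x : ∀ x : A, k2i * (f1 * x) = q⁻¹ • (f1 * (k2i * x)) := fun x => by
    rw [← mul_assoc, m8, smul_mul_assoc, mul_assoc]
  -- k commutation
  have c1 : k2 * k1 = k1 * k2 := hkk.symm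
  have c2 : k2 * k1i = k1i * k2 := (comm_inv hk1 hk1' hkk).symm
  have c3 : k2i * k1 = k1 * k2i := comm_inv hk2 hk2' hkk.symm
  have c4 : k2i * k1i = k1i * k2i := comm_inv hk2 hk2' c2
  have c1x : ∀ x : A, k2 * (k1 * x) = k1 * (k2 * x) := fun x => by
    rw [← mul_assoc, c1, mul_assoc]
  have c2x : ∀ x : A, k2 * (k1i * x) = k1i * (k2 * x) := fun x => by
    rw [← mul_assoc, c2, mul_assoc]
  have c3x : ∀ x : A, k2i * (k1 * x) = k1 * (k2i * x) := fun x => by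
    rw [← mul_assoc, c3, mul_assoc]
  have c4x : ∀ x : A, k2i * (k1i * x) = k1i * (k2i * x) := fun x => by
    rw [← mul_assoc, c4, mul_assoc]
  -- e/f exchange rules
  have r1 : e1 * f1 = f1 * e1 + t • k1 - t • k1i := by
    have := hef1
    rw [smul_sub] at this
    linear_combination (norm := noncomm_ring) this
  have r2 : e2 * f2 = t • k2 - t • k2i - f2 * e2 := by
    have := hef2
    rw [smul_sub] at this
    linear_combination (norm := noncomm_ring) this
  have r3 : e1 * f2 = f2 * e1 := he1f2
  have r4 : e2 * f1 = f1 * e2 := he2f1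
  have r1x : ∀ x : A, e1 * (f1 * x) = f1 * (e1 * x) + t • (k1 * x) - t • (k1i * x) := fun x => by
    rw [← mul_assoc, r1, sub_mul, add_mul, smul_mul_assoc, smul_mul_assoc, mul_assoc]
  have r2x : ∀ x : A, e2 * (f2 * x) = t • (k2 * x) - t • (k2i * x) - f2 * (e2 * x) := fun x => by
    rw [← mul_assoc, r2, sub_mul, sub_mul, smul_mul_assoc, smul_mul_assoc, mul_assoc]
  have r3x : ∀ x : A, e1 * (f2 * x) = f2 * (e1 * x) := fun x => by
    rw [← mul_assoc, r3, mul_assoc]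
  have r4x : ∀ x : A, e2 * (f1 * x) = f1 * (e2 * x) := fun x => by
    rw [← mul_assoc, r4, mul_assoc]
  set_option maxHeartbeats 4000000 in
  simp only [mul_sub, sub_mul, mul_add, add_mul, smul_mul_assoc, mul_smul_comm,
    smul_smul, smul_sub, smul_add, mul_assoc,
    r1, r1x, r2, r2x, r3, r3x, r4, r4x,
    m1, m1x, m2, m2x, m3, m3x, m4, m4x, m5, m5x, m6, m6x, m7, m7x, m8, m8x,
    c1, c1x, c2, c2x, c3, c3x, c4, c4x]
  have h21 : q ^ 2 - 1 ≠ 0 := sub_ne_zero.mpr hq2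
  have hdq : q - q⁻¹ = (q ^ 2 - 1) / q := by field_simp
  match_scalars <;> (try simp only [ht, hdq]) <;> field_simp <;> try ring
end
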